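/- For the 2×2 matrix A = [[1, 2], [-2/3, 1]], the smallest singular value of A equals 1, and the matrix M = (A + I)(A - I)⁻¹ equals [[1, -3], [1, 1]], which is a P-matrix (all principal minors positive) but is not positive definite (there exists a nonzero u with uᵀMu = 0). -/

import Mathlib

open Matrix

/-- The smallest singular value of `A`, as the infimum of `‖Ax‖` over unit vectors. -/
noncomputable def sigmaMin {n : ℕ} (A : Matrix (Fin n) (Fin n) ℝ) : ℝ :=
  sInf {r : ℝ | ∃ x : EuclideanSpace ℝ (Fin n), ‖x‖ = 1 ∧ r = ‖Matrix.toEuclideanLin A x‖}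

/-- For `A = [[1, 2], [-2/3, 1]]`: `σ_min(A) = 1`, `M = (A + I)(A - I)⁻¹ = [[1,-3],[1,1]]`
is a P-matrix (all principal minors positive) but not positive definite
(there is a nonzero `u` with `uᵀMu = 0`). -/
theorem example_sigmaMin_one (A M : Matrix (Fin 2) (Fin 2) ℝ)
    (hA : A = !![(1 : ℝ), 2; -2/3, 1]) (hM : M = (A + 1) * (A - 1)⁻¹) :
    sigmaMin A = 1 ∧ M = !![(1 : ℝ), -3; 1, 1] ∧
      (0 < M 0 0 ∧ 0 < M 1 1 ∧ 0 < M.det) ∧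
      ∃ u : Fin 2 → ℝ, u ≠ 0 ∧ u ⬝ᵥ M.mulVec u = 0 := by
  subst hA
  have hMval : M = !![(1 : ℝ), -3; 1, 1] := by
    have hinv : (!![(1 : ℝ), 2; -2/3, 1] - 1)⁻¹ = !![(0 : ℝ), -3/2; 1/2, 0] := by
      apply inv_eq_right_inv
      ext i j
      fin_cases i <;> fin_cases j <;>
        simp [Matrix.mul_apply, Fin.sum_univ_two, Matrix.one_apply] <;> norm_num
    rw [hM, hinv]
    ext i j
    fin_cases i <;> fin_cases j <;>
      simp [Matrix.mul_apply, Fin.sum_univ_two] <;> norm_num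
  have hs0 : Real.sqrt 10 ≠ 0 := by positivity
  have hs2 : Real.sqrt 10 ^ 2 = 10 := Real.sq_sqrt (by norm_num)
  refine ⟨?_, hMval, ?_, ⟨![1, 1], ?_, ?_⟩⟩
  · -- sigmaMin = 1
    apply le_antisymm
    · apply csInf_le
      · exact ⟨0, fun r ⟨x, hx, hr⟩ => hr ▸ norm_nonneg _⟩
      · refine ⟨(WithLp.equiv 2 (Fin 2 → ℝ)).symm ![3 / Real.sqrt 10, -1 / Real.sqrt 10], ?_, ?_⟩
        · rw [EuclideanSpace.norm_eq]
          simp only [Fin.sum_univ_two, WithLp.equiv_symm_apply, WithLp.ofLp_toLp, Matrix.cons_val_zero,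
            Matrix.cons_val_one, Matrix.head_cons, Real.norm_eq_abs, sq_abs]
          rw [show (3 / Real.sqrt 10) ^ 2 + (-1 / Real.sqrt 10) ^ 2 = 1 by
            field_simp
            nlinarith [hs2]]
          exact Real.sqrt_one
        · rw [WithLp.equiv_symm_apply, Matrix.toEuclideanLin_apply_piLp_toLp, EuclideanSpace.norm_eq]
          simp [Fin.sum_univ_two, Matrix.mulVec, dotProduct]
          rw [eq_comm, Real.sqrt_eq_one]
          field_simp
          nlinarith [hs2]
    · apply le_csInf
      · exact ⟨_, (WithLp.equiv 2 (Fin 2 → ℝ)).symm ![1, 0], by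
          rw [EuclideanSpace.norm_eq]; simp [Fin.sum_univ_two], rfl⟩
      · rintro r ⟨x, hx, rfl⟩
        have hx2 : x 0 ^ 2 + x 1 ^ 2 = 1 := by
          have h := hx
          rw [EuclideanSpace.norm_eq] at h
          have h2 : Real.sqrt (∑ i, ‖x i‖ ^ 2) ^ 2 = 1 := by rw [h]; norm_num
          rw [Real.sq_sqrt (by positivity)] at h2
          simpa [Fin.sum_univ_two, sq_abs] using h2
        rw [Matrix.toEuclideanLin_apply, EuclideanSpace.norm_eq]
        simp only [Fin.sum_univ_two]
        rw [Real.le_sqrt' (by norm_num)]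
        simp [Matrix.mulVec, dotProduct, Fin.sum_univ_two]
        nlinarith [sq_nonneg (2/3 * x 0 + 2 * x 1), hx2]
  · rw [hMval]
    refine ⟨by norm_num, by norm_num, ?_⟩
    simp [Matrix.det_fin_two]
    norm_num
  · intro h
    have := congrFun h 0
    simp at this
  · rw [hMval]
    simp [Matrix.mulVec, dotProduct, Fin.sum_univ_two]
    norm_num
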